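/- arXiv:2404.04843 — 10 statements merged into one kernel-verified Lean document; each statement's English description precedes it below -/
import Mathlib

section
/- Suppose a dataset (p^t,x^t)_{t≤T} satisfies cyclical monotonicity. Define U: ℝ_+^L → ℝ by U(x) = inf over all finite sequences t_1,...,t_K of [ p^{t_K}·(x - x^{t_K}) + ∑_{k=1}^{K-1} p^{t_k}·(x^{t_{k+1}} - x^{t_k}) ]. Then U is real-valued (the infimum is finite and attained by a sequence of at most T distinct indices), U is concave, continuous, and increasing, and U quasilinear rationalizes the data: U(x^t) - p^t·x^t ≥ U(x) - p^t·x for all t and all x ∈ ℝ_+^L. -/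
open Matrix BigOperators

/-- The value of a finite chain `t_1, ..., t_K, t_{K+1}` used in the definition of the
rationalizing utility: `p^{t_{K+1}}·(y - x^{t_{K+1}}) + ∑_{k=1}^{K} p^{t_k}·(x^{t_{k+1}} - x^{t_k})`. -/
def chainVal {L T : ℕ} (p X : Fin T → Fin L → ℝ) (y : Fin L → ℝ)
    {K : ℕ} (t : Fin (K + 1) → Fin T) : ℝ :=
  (p (t (Fin.last K)) ⬝ᵥ y - p (t (Fin.last K)) ⬝ᵥ X (t (Fin.last K))) +
    ∑ k : Fin K,
      (p (t k.castSucc) ⬝ᵥ X (t k.succ) - p (t k.castSucc) ⬝ᵥ X (t k.castSucc))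

namespace QLR

variable {L T : ℕ}

def G (p x : Fin T → Fin L → ℝ) (y : Fin L → ℝ) : Fin T → List (Fin T) → ℝ
  | s, [] => p s ⬝ᵥ y - p s ⬝ᵥ x s
  | s, a :: l => (p s ⬝ᵥ x a - p s ⬝ᵥ x s) + G p x y a l

def H (p x : Fin T → Fin L → ℝ) : Fin T → List (Fin T) → Fin T → ℝ
  | s, [], e => p s ⬝ᵥ x e - p s ⬝ᵥ x s
  | s, a :: l, e => (p s ⬝ᵥ x a - p s ⬝ᵥ x s) + H p x a l e

lemma G_append (p x : Fin T → Fin L → ℝ) (y : Fin L → ℝ) (e : Fin T) (l₂ : List (Fin T)) :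
    ∀ (l₁ : List (Fin T)) (s : Fin T),
      G p x y s (l₁ ++ e :: l₂) = H p x s l₁ e + G p x y e l₂
  | [], s => by simp [G, H]
  | a :: l₁, s => by
    have ih := G_append p x y e l₂ l₁ a
    simp only [List.cons_append, G, H, List.append_eq] at *
    rw [ih]; ring

lemma chainVal_eq_G (p x : Fin T → Fin L → ℝ) (y : Fin L → ℝ) :
    ∀ (K : ℕ) (t : Fin (K + 1) → Fin T),
      chainVal p x y t = G p x y (t 0) (List.ofFn fun j : Fin K => t j.succ)
  | 0, t => by
    simp [chainVal, G, Fin.last]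
  | K + 1, t => by
    have ih := chainVal_eq_G p x y K (fun j => t j.succ)
    have h1 : chainVal p x y t
        = (p (t 0) ⬝ᵥ x (t 1) - p (t 0) ⬝ᵥ x (t 0))
          + chainVal p x y (fun j : Fin (K + 1) => t j.succ) := by
      simp only [chainVal, Fin.sum_univ_succ, Fin.succ_castSucc, Fin.castSucc_zero,
        Fin.succ_zero_eq_one, Fin.succ_last]
      ring
    rw [h1, ih, List.ofFn_succ]
    simp only [G, Fin.succ_zero_eq_one]

lemma sum_eq_H (p x : Fin T → Fin L → ℝ) :
    ∀ (K : ℕ) (t : Fin (K + 2) → Fin T),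
      ∑ k : Fin (K + 1),
          (p (t k.castSucc) ⬝ᵥ x (t k.succ) - p (t k.castSucc) ⬝ᵥ x (t k.castSucc))
        = H p x (t 0) (List.ofFn fun j : Fin K => t j.succ.castSucc) (t (Fin.last (K + 1)))
  | 0, t => by
    simp [H, Fin.sum_univ_one, Fin.last]
  | K + 1, t => by
    have ih := sum_eq_H p x K (fun j => t j.succ)
    rw [Fin.sum_univ_succ, List.ofFn_succ]
    simp only [Fin.succ_castSucc, Fin.succ_zero_eq_one, Fin.castSucc_zero,
      Fin.succ_last, Fin.castSucc_one] at ih ⊢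
    rw [ih]
    simp only [H]

lemma H_self_nonneg (p x : Fin T → Fin L → ℝ)
    (hcm : ∀ (K : ℕ) (t : Fin (K + 1) → Fin T), t 0 = t (Fin.last K) →
      ∑ k : Fin K,
        (p (t k.castSucc) ⬝ᵥ x (t k.castSucc) - p (t k.castSucc) ⬝ᵥ x (t k.succ)) ≤ 0)
    (s : Fin T) (l : List (Fin T)) : 0 ≤ H p x s l s := by
  set t : Fin (l.length + 2) → Fin T := Fin.cons s (Fin.snoc l.get s) with ht
  have h0 : t 0 = s := rfl
  have hlast : t (Fin.last (l.length + 1)) = s := by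
    rw [ht, ← Fin.succ_last, Fin.cons_succ, Fin.snoc_last]
  have hmid : (fun j : Fin l.length => t j.succ.castSucc) = l.get := by
    funext j
    rw [ht, ← Fin.succ_castSucc, Fin.cons_succ, Fin.snoc_castSucc]
  have hsum := sum_eq_H p x l.length t
  rw [hmid, h0, hlast, List.ofFn_get] at hsum
  have hc := hcm (l.length + 1) t (h0.trans hlast.symm)
  have hzero : (∑ k : Fin (l.length + 1),
        (p (t k.castSucc) ⬝ᵥ x (t k.succ) - p (t k.castSucc) ⬝ᵥ x (t k.castSucc)))
      + ∑ k : Fin (l.length + 1),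
        (p (t k.castSucc) ⬝ᵥ x (t k.castSucc) - p (t k.castSucc) ⬝ᵥ x (t k.succ)) = 0 := by
    rw [← Finset.sum_add_distrib]
    simp
  linarith

lemma exists_shorter (p x : Fin T → Fin L → ℝ) (y : Fin L → ℝ)
    (hH : ∀ (s : Fin T) (l : List (Fin T)), 0 ≤ H p x s l s) :
    ∀ (l : List (Fin T)) (s : Fin T), ¬(s :: l).Nodup →
      ∃ l', l'.length < l.length ∧ G p x y s l' ≤ G p x y s l
  | [], s, h => (h (List.nodup_singleton s)).elim
  | a :: l₂, s, h => by
    by_cases hs : s ∈ a :: l₂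
    · obtain ⟨l₁, l₃, hsplit⟩ := List.append_of_mem hs
      refine ⟨l₃, ?_, ?_⟩
      · have hl := congrArg List.length hsplit
        simp only [List.length_cons, List.length_append] at hl ⊢
        omega
      · rw [hsplit, G_append]
        have := hH s l₁
        linarith
    · have h2 : ¬(a :: l₂).Nodup := by
        rw [List.nodup_cons] at h
        tauto
      obtain ⟨l', hlen, hle⟩ := exists_shorter p x y hH l₂ a h2
      refine ⟨a :: l', by simpa using hlen, ?_⟩
      simp only [G]
      linarith

lemma exists_nodup_le (p x : Fin T → Fin L → ℝ) (y : Fin L → ℝ)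
    (hH : ∀ (s : Fin T) (l : List (Fin T)), 0 ≤ H p x s l s) :
    ∀ (n : ℕ) (s : Fin T) (l : List (Fin T)), l.length ≤ n →
      ∃ l', (s :: l').Nodup ∧ G p x y s l' ≤ G p x y s l
  | 0, s, l, hn => by
    have hl : l = [] := List.length_eq_zero_iff.mp (Nat.le_zero.mp hn)
    subst hl
    exact ⟨[], List.nodup_singleton s, le_rfl⟩
  | n + 1, s, l, hn => by
    by_cases h : (s :: l).Nodup
    · exact ⟨l, h, le_rfl⟩
    · obtain ⟨l₂, hlen, hle⟩ := exists_shorter p x y hH l s h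
      obtain ⟨l', hnd, hle'⟩ := exists_nodup_le p x y hH n s l₂ (by omega)
      exact ⟨l', hnd, hle'.trans hle⟩

lemma G_eq_chainVal (p x : Fin T → Fin L → ℝ) (y : Fin L → ℝ) (s : Fin T) (l : List (Fin T)) :
    G p x y s l = chainVal p x y (s :: l).get := by
  rw [chainVal_eq_G p x y l.length]
  simp [List.get_cons_zero, List.get_cons_succ, List.ofFn_get]

lemma chainVal_snoc (p x : Fin T → Fin L → ℝ) (y : Fin L → ℝ) {K : ℕ}
    (t : Fin (K + 1) → Fin T) (s : Fin T) :
    chainVal p x y (Fin.snoc t s) = chainVal p x (x s) t + (p s ⬝ᵥ y - p s ⬝ᵥ x s) := by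
  simp only [chainVal]
  rw [Fin.sum_univ_castSucc]
  simp only [Fin.snoc_last, Fin.succ_castSucc, Fin.snoc_castSucc, Fin.succ_last]
  ring


lemma exists_min_chain (hT : 0 < T) (p x : Fin T → Fin L → ℝ)
    (hH : ∀ (s : Fin T) (l : List (Fin T)), 0 ≤ H p x s l s) (y : Fin L → ℝ) :
    ∃ (K : ℕ) (_ : K + 1 ≤ T) (t : Fin (K + 1) → Fin T),
      Function.Injective t ∧
        IsLeast {v : ℝ | ∃ (K' : ℕ) (t' : Fin (K' + 1) → Fin T), v = chainVal p x y t'}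
          (chainVal p x y t) := by
  have red : ∀ (K : ℕ) (t : Fin (K + 1) → Fin T),
      ∃ (K' : ℕ) (_ : K' + 1 ≤ T) (t' : Fin (K' + 1) → Fin T),
        Function.Injective t' ∧ chainVal p x y t' ≤ chainVal p x y t := by
    intro K t
    obtain ⟨l', hnd, hle⟩ := exists_nodup_le p x y hH
      (List.ofFn fun j : Fin K => t j.succ).length (t 0)
      (List.ofFn fun j : Fin K => t j.succ) le_rfl
    refine ⟨l'.length, ?_, (t 0 :: l').get, ?_, ?_⟩
    · have := hnd.length_le_card
      simpa using this
    · exact List.nodup_iff_injective_get.mp hnd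
    · rw [← G_eq_chainVal, chainVal_eq_G p x y K t]
      exact hle
  haveI hne : Nonempty ((K : Fin T) × (Fin (K.1 + 1) → Fin T)) :=
    ⟨⟨⟨0, hT⟩, fun _ => ⟨0, hT⟩⟩⟩
  obtain ⟨i₀, hi₀⟩ := Finite.exists_min
    (fun i : (K : Fin T) × (Fin (K.1 + 1) → Fin T) => chainVal p x y i.2)
  have hlb : ∀ v ∈ {v : ℝ | ∃ (K' : ℕ) (t' : Fin (K' + 1) → Fin T), v = chainVal p x y t'},
      chainVal p x y i₀.2 ≤ v := by
    rintro v ⟨K', t', rfl⟩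
    obtain ⟨K'', hK'', t'', -, hle⟩ := red K' t'
    have h := hi₀ ⟨⟨K'', by omega⟩, t''⟩
    exact h.trans hle
  obtain ⟨K, hK, t, hinj, hle⟩ := red i₀.1.1 i₀.2
  have hmem : chainVal p x y t
      ∈ {v : ℝ | ∃ (K' : ℕ) (t' : Fin (K' + 1) → Fin T), v = chainVal p x y t'} :=
    ⟨K, t, rfl⟩
  have heq : chainVal p x y t = chainVal p x y i₀.2 := le_antisymm hle (hlb _ hmem)
  exact ⟨K, hK, t, hinj, hmem, fun v hv => heq ▸ hlb v hv⟩

end QLR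

/-- under cyclical monotonicity, the function `U` defined as the infimum of
chain values is finite (the infimum is a lower bound and is attained by a chain of at most
`T` distinct indices), concave, continuous and increasing on `ℝ_+^L`, and it quasilinear
rationalizes the data. -/
theorem inf_chain_utility_quasilinear_rationalizes
    {L T : ℕ} (hT : 0 < T) (p x : Fin T → Fin L → ℝ)
    (hp : ∀ t i, 0 < p t i) (hx : ∀ t i, 0 ≤ x t i)
    (hcm : ∀ (K : ℕ) (t : Fin (K + 1) → Fin T), t 0 = t (Fin.last K) →
      ∑ k : Fin K,
        (p (t k.castSucc) ⬝ᵥ x (t k.castSucc) - p (t k.castSucc) ⬝ᵥ x (t k.succ)) ≤ 0)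
    (U : (Fin L → ℝ) → ℝ)
    (hU : ∀ y : Fin L → ℝ,
      U y = sInf {v : ℝ | ∃ (K : ℕ) (t : Fin (K + 1) → Fin T), v = chainVal p x y t}) :
    -- the infimum is finite and attained by a sequence of at most T distinct indices
    (∀ y : Fin L → ℝ,
      (∀ (K : ℕ) (t : Fin (K + 1) → Fin T), U y ≤ chainVal p x y t) ∧
      (∃ (K : ℕ) (_ : K + 1 ≤ T) (t : Fin (K + 1) → Fin T),
        Function.Injective t ∧ U y = chainVal p x y t)) ∧
    -- concave on ℝ_+^L
    ConcaveOn ℝ {y : Fin L → ℝ | ∀ i, 0 ≤ y i} U ∧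
    -- continuous on ℝ_+^L
    ContinuousOn U {y : Fin L → ℝ | ∀ i, 0 ≤ y i} ∧
    -- increasing on ℝ_+^L
    (∀ a b : Fin L → ℝ, (∀ i, 0 ≤ a i) → (∀ i, 0 ≤ b i) →
      (∀ i, a i ≤ b i) → U a ≤ U b) ∧
    (∀ a b : Fin L → ℝ, (∀ i, 0 ≤ a i) → (∀ i, 0 ≤ b i) →
      (∀ i, a i ≤ b i) → a ≠ b → U a < U b) ∧
    -- quasilinear rationalization
    (∀ (t : Fin T) (y : Fin L → ℝ), (∀ i, 0 ≤ y i) →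
      U y - p t ⬝ᵥ y ≤ U (x t) - p t ⬝ᵥ x t) := by
  have hH : ∀ (s : Fin T) (l : List (Fin T)), 0 ≤ QLR.H p x s l s :=
    fun s l => QLR.H_self_nonneg p x hcm s l
  have main := fun y => QLR.exists_min_chain hT p x hH y
  -- finiteness facts
  have hUle : ∀ (y : Fin L → ℝ) (K : ℕ) (t : Fin (K + 1) → Fin T),
      U y ≤ chainVal p x y t := by
    intro y K t
    obtain ⟨K₀, hK₀, t₀, hinj, hleast⟩ := main y
    rw [hU y, hleast.csInf_eq]
    exact hleast.2 ⟨K, t, rfl⟩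
  have hUex : ∀ y : Fin L → ℝ, ∃ (K : ℕ) (_ : K + 1 ≤ T) (t : Fin (K + 1) → Fin T),
      Function.Injective t ∧ U y = chainVal p x y t := by
    intro y
    obtain ⟨K₀, hK₀, t₀, hinj, hleast⟩ := main y
    exact ⟨K₀, hK₀, t₀, hinj, by rw [hU y, hleast.csInf_eq]⟩
  -- affine structure in y
  have haff : ∀ (y : Fin L → ℝ) (K : ℕ) (t : Fin (K + 1) → Fin T),
      chainVal p x y t = p (t (Fin.last K)) ⬝ᵥ y + chainVal p x (0 : Fin L → ℝ) t := by
    intro y K t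
    simp only [chainVal, dotProduct_zero]
    ring
  have hcomb : ∀ (a b : ℝ), a + b = 1 → ∀ (u v : Fin L → ℝ) (K : ℕ)
      (t : Fin (K + 1) → Fin T),
      chainVal p x (a • u + b • v) t = a * chainVal p x u t + b * chainVal p x v t := by
    intro a b hab u v K t
    rw [haff (a • u + b • v), haff u, haff v]
    have hdp : p (t (Fin.last K)) ⬝ᵥ (a • u + b • v)
        = a * (p (t (Fin.last K)) ⬝ᵥ u) + b * (p (t (Fin.last K)) ⬝ᵥ v) := by
      simp [dotProduct_add, dotProduct_smul, smul_eq_mul]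
    rw [hdp]
    linear_combination (-(chainVal p x (0 : Fin L → ℝ) t)) * hab
  have hdot_le : ∀ (q : Fin T) (a b : Fin L → ℝ), (∀ i, a i ≤ b i) →
      p q ⬝ᵥ a ≤ p q ⬝ᵥ b := by
    intro q a b hab
    refine Finset.sum_le_sum fun i _ => ?_
    exact mul_le_mul_of_nonneg_left (hab i) (hp q i).le
  have hdot_lt : ∀ (q : Fin T) (a b : Fin L → ℝ), (∀ i, a i ≤ b i) → a ≠ b →
      p q ⬝ᵥ a < p q ⬝ᵥ b := by
    intro q a b hab hne
    obtain ⟨i₀, hi₀⟩ := Function.ne_iff.mp hne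
    refine Finset.sum_lt_sum (fun i _ => mul_le_mul_of_nonneg_left (hab i) (hp q i).le)
      ⟨i₀, Finset.mem_univ _, ?_⟩
    exact mul_lt_mul_of_pos_left (lt_of_le_of_ne (hab i₀) hi₀) (hp q i₀)
  refine ⟨fun y => ⟨hUle y, hUex y⟩, ?_, ?_, ?_, ?_, ?_⟩
  · -- concave
    constructor
    · intro u hu v hv a b ha hb hab i
      simp only [Pi.add_apply, Pi.smul_apply, smul_eq_mul]
      exact add_nonneg (mul_nonneg ha (hu i)) (mul_nonneg hb (hv i))
    · intro u hu v hv a b ha hb hab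
      obtain ⟨K, hK, t, -, hEq⟩ := hUex (a • u + b • v)
      simp only [smul_eq_mul]
      rw [hEq, hcomb a b hab u v K t]
      have h1 := mul_le_mul_of_nonneg_left (hUle u K t) ha
      have h2 := mul_le_mul_of_nonneg_left (hUle v K t) hb
      linarith
  · -- continuous
    have hcont : ∀ (K : ℕ) (t : Fin (K + 1) → Fin T),
        Continuous (fun y : Fin L → ℝ => chainVal p x y t) := by
      intro K t
      have hfe : (fun y : Fin L → ℝ => chainVal p x y t)
          = fun y => p (t (Fin.last K)) ⬝ᵥ y + chainVal p x (0 : Fin L → ℝ) t :=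
        funext fun y => haff y K t
      rw [hfe]
      have : Continuous fun y : Fin L → ℝ => ∑ i, p (t (Fin.last K)) i * y i :=
        continuous_finset_sum _ fun i _ => continuous_const.mul (continuous_apply i)
      exact this.add continuous_const
    haveI hne : Nonempty ((K : Fin T) × (Fin (K.1 + 1) → Fin T)) :=
      ⟨⟨⟨0, hT⟩, fun _ => ⟨0, hT⟩⟩⟩
    have hUinf : U = fun y => Finset.univ.inf' Finset.univ_nonempty
        (fun i : (K : Fin T) × (Fin (K.1 + 1) → Fin T) => chainVal p x y i.2) := by
      funext y
      apply le_antisymm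
      · obtain ⟨i, -, hieq⟩ := Finset.exists_mem_eq_inf' (Finset.univ_nonempty)
          (fun i : (K : Fin T) × (Fin (K.1 + 1) → Fin T) => chainVal p x y i.2)
        rw [hieq]
        exact hUle y _ i.2
      · obtain ⟨K, hK, t, -, hEq⟩ := hUex y
        rw [hEq]
        exact Finset.inf'_le _
          (Finset.mem_univ (⟨⟨K, by omega⟩, t⟩ : (K : Fin T) × (Fin (K.1 + 1) → Fin T)))
    have hcont2 : ∀ (s : Finset ((K : Fin T) × (Fin (K.1 + 1) → Fin T))) (hs : s.Nonempty),
        Continuous (fun y : Fin L → ℝ => s.inf' hs (fun i => chainVal p x y i.2)) := by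
      intro s
      induction s using Finset.cons_induction with
      | empty => intro hs; exact absurd hs (by simp)
      | cons a s ha ih =>
        intro hs
        rcases s.eq_empty_or_nonempty with rfl | hs'
        · simpa using hcont _ a.2
        · have hfe : (fun y : Fin L → ℝ =>
              (Finset.cons a s ha).inf' hs fun i => chainVal p x y i.2)
              = fun y => min (chainVal p x y a.2) (s.inf' hs' fun i => chainVal p x y i.2) := by
            funext y
            rw [Finset.inf'_cons]
          rw [hfe]
          exact (hcont _ a.2).min (ih hs')
    rw [hUinf]
    exact (hcont2 _ _).continuousOn
  · -- monotone
    intro a b ha hb hab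
    obtain ⟨K, hK, t, -, hEq⟩ := hUex b
    calc U a ≤ chainVal p x a t := hUle a K t
      _ ≤ chainVal p x b t := by
        rw [haff a, haff b]
        have := hdot_le (t (Fin.last K)) a b hab
        linarith
      _ = U b := hEq.symm
  · -- strictly monotone
    intro a b ha hb hab hne
    obtain ⟨K, hK, t, -, hEq⟩ := hUex b
    calc U a ≤ chainVal p x a t := hUle a K t
      _ < chainVal p x b t := by
        rw [haff a, haff b]
        have := hdot_lt (t (Fin.last K)) a b hab hne
        linarith
      _ = U b := hEq.symm
  · -- rationalization
    intro t y hy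
    obtain ⟨K, hK, t₀, -, hEq⟩ := hUex (x t)
    have h := hUle y (K + 1) (Fin.snoc t₀ t)
    rw [QLR.chainVal_snoc, ← hEq] at h
    linarith
end

section
/- If a dataset (p^t,x^t)_{t≤T} is quasilinear rationalized by a utility function U, then U also additively rationalizes the data: for any (x̃^1,...,x̃^T) ∈ ℝ_+^{LT} with ∑_t p^t·x̃^t ≤ ∑_t p^t·x^t, we have ∑_t U(x̃^t) ≤ ∑_t U(x^t), with strict inequality whenever ∑_t p^t·x̃^t < ∑_t p^t·x^t. -/
open Matrix BigOperators

/-- quasilinear rationalization implies additive rationalization. -/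
theorem quasilinear_rationalization_implies_additive_rationalization
    {L T : ℕ} (p x : Fin T → Fin L → ℝ)
    (hp : ∀ t i, 0 < p t i) (hx : ∀ t i, 0 ≤ x t i)
    (U : (Fin L → ℝ) → ℝ)
    (hU : ∀ (t : Fin T) (y : Fin L → ℝ), (∀ i, 0 ≤ y i) →
      U y - p t ⬝ᵥ y ≤ U (x t) - p t ⬝ᵥ x t) :
    ∀ xt : Fin T → Fin L → ℝ, (∀ t i, 0 ≤ xt t i) →
      ((∑ t, p t ⬝ᵥ xt t ≤ ∑ t, p t ⬝ᵥ x t → ∑ t, U (xt t) ≤ ∑ t, U (x t)) ∧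
       (∑ t, p t ⬝ᵥ xt t < ∑ t, p t ⬝ᵥ x t → ∑ t, U (xt t) < ∑ t, U (x t))) := by
  intro xt hxt
  have key : ∑ t, U (xt t) ≤ ∑ t, U (x t) - (∑ t, p t ⬝ᵥ x t - ∑ t, p t ⬝ᵥ xt t) := by
    have h : ∀ t : Fin T, U (xt t) ≤ U (x t) - (p t ⬝ᵥ x t - p t ⬝ᵥ xt t) := by
      intro t; have := hU t (xt t) (hxt t); linarith
    calc ∑ t, U (xt t) ≤ ∑ t, (U (x t) - (p t ⬝ᵥ x t - p t ⬝ᵥ xt t)) :=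
          Finset.sum_le_sum fun t _ => h t
      _ = ∑ t, U (x t) - (∑ t, p t ⬝ᵥ x t - ∑ t, p t ⬝ᵥ xt t) := by
          simp [Finset.sum_sub_distrib]
  constructor <;> intro h <;> linarith
end

section
/- If a dataset (p^t,x^t)_{t≤T} is additively rationalized by some utility function U, then the dataset satisfies cyclical monotonicity (hence admits no money pump). -/
open Matrix BigOperators

/-- additive rationalization implies cyclical monotonicity (no money pump). -/
theorem additive_rationalization_implies_cyclical_monotonicity
    {L T : ℕ} (p x : Fin T → Fin L → ℝ)
    (hp : ∀ t i, 0 < p t i) (hx : ∀ t i, 0 ≤ x t i)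
    (U : (Fin L → ℝ) → ℝ)
    (hweak : ∀ xt : Fin T → Fin L → ℝ, (∀ t i, 0 ≤ xt t i) →
      ∑ t, p t ⬝ᵥ xt t ≤ ∑ t, p t ⬝ᵥ x t → ∑ t, U (xt t) ≤ ∑ t, U (x t))
    (hstrict : ∀ xt : Fin T → Fin L → ℝ, (∀ t i, 0 ≤ xt t i) →
      ∑ t, p t ⬝ᵥ xt t < ∑ t, p t ⬝ᵥ x t → ∑ t, U (xt t) < ∑ t, U (x t)) :
    ∀ σ : Equiv.Perm (Fin T), ∑ t, (p t ⬝ᵥ x t - p t ⬝ᵥ x (σ t)) ≤ 0 := by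
  intro σ
  by_contra h
  push_neg at h
  rw [Finset.sum_sub_distrib, sub_pos] at h
  have hs := hstrict (fun t => x (σ t)) (fun t i => hx (σ t) i) h
  have heq : ∑ t, U (x (σ t)) = ∑ t, U (x t) :=
    Equiv.sum_comp σ (fun t => U (x t))
  linarith
end

section
/- For any dataset and any utility function U: ℝ_+^L → ℝ, the quasilinear utility waste ∑_{t=1}^T ( sup_{x ∈ ℝ_+^L} [U(x) - p^t·x] - [U(x^t) - p^t·x^t] ) is at least ∑_{t=1}^T p^t·(x^t - x^{σ(t)}) for every permutation σ; consequently Q ≥ TMP, where Q is the infimum of the waste over utility functions and TMP = sup_σ ∑_t p^t·(x^t - x^{σ(t)}). -/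
open Matrix BigOperators

private lemma ereal_coe_sum {α : Type*} (s : Finset α) (f : α → ℝ) :
    ((∑ a ∈ s, f a : ℝ) : EReal) = ∑ a ∈ s, ((f a : ℝ) : EReal) := by
  induction s using Finset.cons_induction with
  | empty => simp
  | cons a s h ih => rw [Finset.sum_cons, Finset.sum_cons, EReal.coe_add, ih]

/-- The quasilinear utility waste at observation `t` (valued in `EReal`, since the
supremum over all of `ℝ_+^L` may be infinite). -/
noncomputable def qlWaste {L T : ℕ} (p x : Fin T → Fin L → ℝ)
    (U : (Fin L → ℝ) → ℝ) (t : Fin T) : EReal :=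
  (⨆ y : {y : Fin L → ℝ // ∀ i, 0 ≤ y i}, ((U y.1 - p t ⬝ᵥ y.1 : ℝ) : EReal)) -
    ((U (x t) - p t ⬝ᵥ x t : ℝ) : EReal)

/-- for every utility function the quasilinear waste dominates every money
pump value; consequently `Q ≥ TMP`. -/
theorem quasilinear_waste_ge_money_pump
    {L T : ℕ} (p x : Fin T → Fin L → ℝ)
    (hp : ∀ t i, 0 < p t i) (hx : ∀ t i, 0 ≤ x t i) :
    (∀ (U : (Fin L → ℝ) → ℝ) (σ : Equiv.Perm (Fin T)),
      ((∑ t, (p t ⬝ᵥ x t - p t ⬝ᵥ x (σ t)) : ℝ) : EReal) ≤ ∑ t, qlWaste p x U t) ∧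
    (⨆ σ : Equiv.Perm (Fin T), ((∑ t, (p t ⬝ᵥ x t - p t ⬝ᵥ x (σ t)) : ℝ) : EReal)) ≤
      ⨅ U : (Fin L → ℝ) → ℝ, ∑ t, qlWaste p x U t := by
  have main : ∀ (U : (Fin L → ℝ) → ℝ) (σ : Equiv.Perm (Fin T)),
      ((∑ t, (p t ⬝ᵥ x t - p t ⬝ᵥ x (σ t)) : ℝ) : EReal) ≤ ∑ t, qlWaste p x U t := by
    intro U σ
    have key : ∀ t, ((U (x (σ t)) - p t ⬝ᵥ x (σ t) - (U (x t) - p t ⬝ᵥ x t) : ℝ) : EReal)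
        ≤ qlWaste p x U t := by
      intro t
      unfold qlWaste
      have h1 : ((U (x (σ t)) - p t ⬝ᵥ x (σ t) : ℝ) : EReal) ≤
          ⨆ y : {y : Fin L → ℝ // ∀ i, 0 ≤ y i}, ((U y.1 - p t ⬝ᵥ y.1 : ℝ) : EReal) :=
        le_iSup (fun y : {y : Fin L → ℝ // ∀ i, 0 ≤ y i} =>
          ((U y.1 - p t ⬝ᵥ y.1 : ℝ) : EReal)) ⟨x (σ t), hx (σ t)⟩
      rw [EReal.coe_sub]
      exact EReal.sub_le_sub h1 le_rfl
    have hsum : (∑ t, (p t ⬝ᵥ x t - p t ⬝ᵥ x (σ t)) : ℝ)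
        = ∑ t, (U (x (σ t)) - p t ⬝ᵥ x (σ t) - (U (x t) - p t ⬝ᵥ x t)) := by
      have hU : ∑ t, U (x (σ t)) = ∑ t, U (x t) := Equiv.sum_comp σ (fun t => U (x t))
      simp only [Finset.sum_sub_distrib] at *
      linarith
    calc ((∑ t, (p t ⬝ᵥ x t - p t ⬝ᵥ x (σ t)) : ℝ) : EReal)
        = ((∑ t, (U (x (σ t)) - p t ⬝ᵥ x (σ t) - (U (x t) - p t ⬝ᵥ x t)) : ℝ) : EReal) := by
          rw [hsum]
      _ = ∑ t, ((U (x (σ t)) - p t ⬝ᵥ x (σ t) - (U (x t) - p t ⬝ᵥ x t) : ℝ) : EReal) := by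
          rw [ereal_coe_sum]
      _ ≤ ∑ t, qlWaste p x U t := Finset.sum_le_sum (fun t _ => key t)
  refine ⟨main, ?_⟩
  exact iSup_le fun σ => le_iInf fun U => main U σ
end

section
/- For any dataset (p^t,x^t)_{t≤T} and any utility function U, letting e^U = inf { ∑_t p^t·x̃^t : ∑_t U(x̃^t) ≥ ∑_t U(x^t) }, we have ∑_t p^t·x^t - e^U ≥ ∑_t p^t·(x^t - x^{σ(t)}) for every permutation σ; consequently the additive cost inefficiency A = inf_U (∑_t p^t·x^t - e^U) satisfies A ≥ TMP. -/
open Matrix BigOperators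

/-- The minimal expenditure needed to reach the utility target `∑_t U(x^t)` with an
additive (across periods) utility function `U`. -/
noncomputable def minExpenditure {L T : ℕ} (p x : Fin T → Fin L → ℝ)
    (U : (Fin L → ℝ) → ℝ) : ℝ :=
  sInf {c : ℝ | ∃ xt : Fin T → Fin L → ℝ, (∀ t i, 0 ≤ xt t i) ∧
    ∑ t, U (x t) ≤ ∑ t, U (xt t) ∧ c = ∑ t, p t ⬝ᵥ xt t}

/-- for every utility function `U` and permutation `σ`, the additive cost
inefficiency `∑_t p^t·x^t - e^U` dominates the money pump value `∑_t p^t·(x^t - x^{σ(t)})`;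
consequently `A ≥ TMP`. -/
theorem additive_cost_inefficiency_ge_money_pump
    {L T : ℕ} (p x : Fin T → Fin L → ℝ)
    (hp : ∀ t i, 0 < p t i) (hx : ∀ t i, 0 ≤ x t i) :
    (∀ (U : (Fin L → ℝ) → ℝ) (σ : Equiv.Perm (Fin T)),
      ∑ t, (p t ⬝ᵥ x t - p t ⬝ᵥ x (σ t)) ≤ ∑ t, p t ⬝ᵥ x t - minExpenditure p x U) ∧
    (⨆ σ : Equiv.Perm (Fin T), ∑ t, (p t ⬝ᵥ x t - p t ⬝ᵥ x (σ t))) ≤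
      ⨅ U : (Fin L → ℝ) → ℝ, (∑ t, p t ⬝ᵥ x t - minExpenditure p x U) := by
  have key : ∀ (U : (Fin L → ℝ) → ℝ) (σ : Equiv.Perm (Fin T)),
      ∑ t, (p t ⬝ᵥ x t - p t ⬝ᵥ x (σ t)) ≤ ∑ t, p t ⬝ᵥ x t - minExpenditure p x U := by
    intro U σ
    have hmem : (∑ t, p t ⬝ᵥ x (σ t)) ∈ {c : ℝ | ∃ xt : Fin T → Fin L → ℝ,
        (∀ t i, 0 ≤ xt t i) ∧ ∑ t, U (x t) ≤ ∑ t, U (xt t) ∧ c = ∑ t, p t ⬝ᵥ xt t} := by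
      refine ⟨fun t => x (σ t), fun t i => hx _ i, ?_, rfl⟩
      rw [Equiv.sum_comp σ (fun t => U (x t))]
    have hbdd : BddBelow {c : ℝ | ∃ xt : Fin T → Fin L → ℝ,
        (∀ t i, 0 ≤ xt t i) ∧ ∑ t, U (x t) ≤ ∑ t, U (xt t) ∧ c = ∑ t, p t ⬝ᵥ xt t} := by
      refine ⟨0, fun c hc => ?_⟩
      obtain ⟨xt, hxt, _, rfl⟩ := hc
      exact Finset.sum_nonneg fun t _ => Finset.sum_nonneg fun i _ =>
        mul_nonneg (hp t i).le (hxt t i)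
    have hle : minExpenditure p x U ≤ ∑ t, p t ⬝ᵥ x (σ t) := csInf_le hbdd hmem
    rw [Finset.sum_sub_distrib]
    linarith
  refine ⟨key, ?_⟩
  refine le_ciInf fun U => ciSup_le fun σ => key U σ
end

section
/- For any dataset (p^t,x^t)_{t≤T}, the total money pump TMP equals the optimal value ε̄ of the linear program: minimize ∑_{t=1}^T ε_t over (u_1,...,u_T) ∈ ℝ^T and (ε_1,...,ε_T) ∈ ℝ_+^T subject to u_s ≤ u_t + p^t·(x^s - x^t) + ε_t for all s,t ∈ {1,...,T}. -/
/-!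
Write `e t s = p^t ⬝ x^s` for the cost of bundle `s` at the prices of period `t`. Summing the
constraint over the pairs `(σ t, t)` telescopes the `u`'s away, so every feasible `∑ ε` bounds
the money pump of every permutation `σ`. Conversely, fix a permutation `σ` with maximal money
pump. Its optimality means that the reduced costs `e t (σ s) - e t (σ t)` have no negative
cycle, so minus the least weight of a simple path starting at each vertex is a potential for them;
transported along `σ` this potential is a feasible `u` whose slacks `ε` add up to the money pump
of `σ`.
-/

open Matrix BigOperators

variable {α : Type*}

def pathWeight (f : α → α → ℝ) : List α → ℝ
  | [] => 0
  | [_] => 0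
  | a :: b :: l => f a b + pathWeight f (b :: l)

theorem pathWeight_append_cons (f : α → α → ℝ) :
    ∀ (l₁ : List α) (a : α) (l₂ : List α),
      pathWeight f (l₁ ++ a :: l₂) = pathWeight f (l₁ ++ [a]) + pathWeight f (a :: l₂)
  | [], _, _ => by simp [pathWeight]
  | [_], _, _ => by simp [pathWeight]
  | b :: c :: l₁, a, l₂ => by
    have ih := pathWeight_append_cons f (c :: l₁) a l₂
    simp only [List.cons_append, pathWeight] at ih ⊢
    rw [ih]
    ring

theorem pathWeight_append_eq_sum_of_isChain (f : α → α → ℝ) (ρ : α → α) :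
    ∀ (l : List α) (c : α), (l ++ [c]).IsChain (fun x y => ρ x = y) →
      pathWeight f (l ++ [c]) = (l.map fun t => f t (ρ t)).sum
  | [], _, _ => rfl
  | [_], _, h => by simp_all [pathWeight]
  | a :: b :: l, c, h => by
    have ih := pathWeight_append_eq_sum_of_isChain f ρ (b :: l) c
    simp only [List.cons_append, List.isChain_cons_cons, pathWeight, List.map_cons,
      List.sum_cons] at ih h ⊢
    rw [h.1, ih h.2]

theorem List.Nodup.isChain_formPerm_append_head [DecidableEq α] {a : α} {l : List α}
    (h : (a :: l).Nodup) : (a :: l ++ [a]).IsChain (fun x y => (a :: l).formPerm x = y) := by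
  refine List.IsChain.append ?_ (List.isChain_singleton a) ?_
  · exact List.isChain_iff_getElem.mpr fun i hi => List.formPerm_apply_lt_getElem _ h i hi
  · simp [List.getLast?_eq_some_getLast, List.formPerm_apply_getLast]

theorem sum_formPerm_eq_pathWeight [Fintype α] [DecidableEq α] (f : α → α → ℝ)
    (hf : ∀ t, f t t = 0) {a : α} {l : List α} (h : (a :: l).Nodup) :
    ∑ t, f t ((a :: l).formPerm t) = pathWeight f (a :: l ++ [a]) := by
  rw [pathWeight_append_eq_sum_of_isChain f _ _ _ h.isChain_formPerm_append_head,
    ← List.sum_toFinset _ h]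
  refine (Finset.sum_subset (Finset.subset_univ _) fun t _ ht => ?_).symm
  rw [List.formPerm_apply_of_notMem (List.mem_toFinset.not.mp ht), hf]

theorem exists_potential_of_cycle_nonneg [Finite α] (f : α → α → ℝ)
    (hcycle : ∀ (a : α) (l : List α), (a :: l).Nodup → 0 ≤ pathWeight f (a :: l ++ [a])) :
    ∃ u : α → ℝ, ∀ a b, u b ≤ u a + f a b := by
  have := Fintype.ofFinite α
  have hfin (a : α) : {l : List α | (a :: l).Nodup}.Finite :=
    (List.finite_length_le α (Fintype.card α)).subset fun _ hl => hl.of_cons.length_le_card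
  choose P hP hmin using fun a => Set.exists_min_image _ (fun l => pathWeight f (a :: l)) (hfin a)
    ⟨[], List.nodup_singleton a⟩
  refine ⟨fun a => -pathWeight f (a :: P a), fun a b => ?_⟩
  -- If `a` already lies on the optimal path from `b`, cutting out the cycle through `a` leaves a
  -- simple path from `a` that is no heavier.
  suffices pathWeight f (a :: P a) ≤ pathWeight f (a :: b :: P b) by
    simp only [pathWeight] at this; linarith
  by_cases ha : a ∈ b :: P b
  · obtain ⟨l₁, l₂, hsplit⟩ := List.append_of_mem ha
    have hnd : (l₁ ++ a :: l₂).Nodup := hsplit ▸ hP b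
    have hcycle₁ : (a :: l₁).Nodup :=
      (List.nodup_middle.mp hnd).sublist ((List.sublist_append_left l₁ l₂).cons_cons a)
    calc pathWeight f (a :: P a) ≤ pathWeight f (a :: l₂) :=
          hmin a l₂ (hnd.sublist (List.sublist_append_right _ _))
      _ ≤ pathWeight f (a :: l₁ ++ [a]) + pathWeight f (a :: l₂) :=
          le_add_of_nonneg_left (hcycle a l₁ hcycle₁)
      _ = pathWeight f (a :: b :: P b) := by
          rw [hsplit, ← pathWeight_append_cons]; rfl
  · exact hmin a (b :: P b) (List.nodup_cons.mpr ⟨ha, hP b⟩)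

theorem exists_potential_of_sum_perm_nonneg [Fintype α] (f : α → α → ℝ) (hf : ∀ t, f t t = 0)
    (hperm : ∀ π : Equiv.Perm α, 0 ≤ ∑ t, f t (π t)) :
    ∃ u : α → ℝ, ∀ a b, u b ≤ u a + f a b := by
  classical
  exact exists_potential_of_cycle_nonneg f fun a l h => sum_formPerm_eq_pathWeight f hf h ▸ hperm _

section MoneyPump

variable [Fintype α] (e : α → α → ℝ)

def moneyPump (σ : Equiv.Perm α) : ℝ := ∑ t, (e t t - e t (σ t))

def lpValues : Set ℝ :=
  {v | ∃ u ε : α → ℝ, (∀ t, 0 ≤ ε t) ∧ (∀ s t, u s ≤ u t + (e t s - e t t) + ε t) ∧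
    v = ∑ t, ε t}

theorem moneyPump_le_sum (u ε : α → ℝ) (h : ∀ s t, u s ≤ u t + (e t s - e t t) + ε t)
    (σ : Equiv.Perm α) : moneyPump e σ ≤ ∑ t, ε t :=
  calc moneyPump e σ ≤ ∑ t, (u t - u (σ t) + ε t) :=
        Finset.sum_le_sum fun t _ => by linarith [h (σ t) t]
    _ = ∑ t, ε t := by
        rw [Finset.sum_add_distrib, Finset.sum_sub_distrib, Equiv.sum_comp, sub_self, zero_add]

theorem moneyPump_mem_lpValues {σ : Equiv.Perm α} (hσ : ∀ τ, moneyPump e τ ≤ moneyPump e σ) :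
    moneyPump e σ ∈ lpValues e := by
  obtain ⟨w, hw⟩ := exists_potential_of_sum_perm_nonneg (fun a b => e a (σ b) - e a (σ a))
    (fun _ => sub_self _) fun π => by
      have := hσ (π.trans σ)
      simp only [moneyPump, Equiv.trans_apply, Finset.sum_sub_distrib] at this ⊢
      linarith
  set u : α → ℝ := fun s => w (σ.symm s)
  have hfeas (s t : α) : u s ≤ u t + (e t s - e t t) + (u (σ t) - u t + (e t t - e t (σ t))) := by
    have := hw t (σ.symm s)
    simp only [Equiv.apply_symm_apply] at this
    simp only [u, Equiv.symm_apply_apply]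
    linarith
  refine ⟨u, fun t => u (σ t) - u t + (e t t - e t (σ t)), fun t => ?_, hfeas, ?_⟩
  · linarith [hfeas t t]
  · rw [Finset.sum_add_distrib, Finset.sum_sub_distrib, Equiv.sum_comp, sub_self, zero_add]
    rfl

theorem isLeast_lpValues_iSup_moneyPump : IsLeast (lpValues e) (⨆ σ, moneyPump e σ) := by
  obtain ⟨σ, hσ⟩ := Finite.exists_max (moneyPump e)
  rw [le_antisymm (ciSup_le hσ) (le_ciSup (Finite.bddAbove_range _) σ)]
  exact ⟨moneyPump_mem_lpValues e hσ, fun _ ⟨u, ε, _, h, hv⟩ => hv ▸ moneyPump_le_sum e u ε h σ⟩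

end MoneyPump

theorem tmp_eq_lp_value_general
    {L T : ℕ} (p x : Fin T → Fin L → ℝ) :
    (⨆ σ : Equiv.Perm (Fin T), ∑ t, (p t ⬝ᵥ x t - p t ⬝ᵥ x (σ t))) =
      sInf {v : ℝ | ∃ u ε : Fin T → ℝ, (∀ t, 0 ≤ ε t) ∧
        (∀ s t : Fin T, u s ≤ u t + (p t ⬝ᵥ x s - p t ⬝ᵥ x t) + ε t) ∧
        v = ∑ t, ε t} :=
  (isLeast_lpValues_iSup_moneyPump fun t s => p t ⬝ᵥ x s).csInf_eq.symm

/-- the total money pump `TMP` equals the optimal value `ε̄` of the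
Allen–Rehbeck linear program. -/
theorem tmp_eq_lp_value
    {L T : ℕ} (p x : Fin T → Fin L → ℝ)
    (hp : ∀ t i, 0 < p t i) (hx : ∀ t i, 0 ≤ x t i) :
    (⨆ σ : Equiv.Perm (Fin T), ∑ t, (p t ⬝ᵥ x t - p t ⬝ᵥ x (σ t))) =
      sInf {v : ℝ | ∃ u ε : Fin T → ℝ, (∀ t, 0 ≤ ε t) ∧
        (∀ s t : Fin T, u s ≤ u t + (p t ⬝ᵥ x s - p t ⬝ᵥ x t) + ε t) ∧
        v = ∑ t, ε t} :=
  tmp_eq_lp_value_general p x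
end

section
/- A dataset (p^t,x^t)_{t≤T} satisfies GARP if and only if TMP_c = 0, where TMP_c is the supremum of ∑_t p^t·(x^t - x^{σ(t)}) over all constrained permutations σ (those satisfying p^t·x^t ≥ p^t·x^{σ(t)} for all t). -/
/-!
GARP says that no strict revealed preference `a → b` is closed into a cycle by a walk of weak
revealed preferences from `b` back to `a`. A constrained permutation moves every point along a
weak edge, so its orbits are such cycles and, under GARP, every term of its money pump vanishes.
Conversely, a violating walk can be shortened to a simple one; the cyclic permutation along it is
constrained and has a positive money pump, and since there are finitely many permutations the
supremum is attained.
-/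

open Matrix BigOperators

/-- GARP: along any cyclic revealed-preference sequence, none of the revealed-preference
inequalities is strict. -/
def GARP {L T : ℕ} (p x : Fin T → Fin L → ℝ) : Prop :=
  ∀ (K : ℕ) (t : Fin (K + 1) → Fin T), t 0 = t (Fin.last K) →
    (∀ k : Fin K, p (t k.castSucc) ⬝ᵥ x (t k.succ) ≤ p (t k.castSucc) ⬝ᵥ x (t k.castSucc)) →
    ∀ k : Fin K, p (t k.castSucc) ⬝ᵥ x (t k.succ) = p (t k.castSucc) ⬝ᵥ x (t k.castSucc)

open Relation

section Walks

variable {α : Type*} {R : α → α → Prop}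

theorem Relation.ReflTransGen.exists_nodup_isChain_cons {a b : α} (h : ReflTransGen R a b) :
    ∃ l : List α, (a :: l).Nodup ∧ (a :: l).IsChain R ∧
      (a :: l).getLast (List.cons_ne_nil _ _) = b := by
  induction h using ReflTransGen.head_induction_on with
  | refl => exact ⟨[], List.nodup_singleton _, .singleton _, rfl⟩
  | @head a c hac _ ih =>
    obtain ⟨l, hnd, hch, hlast⟩ := ih
    by_cases ha : a ∈ c :: l
    · -- cut the walk at the later visit of `a`
      obtain ⟨s, t, hst⟩ := List.mem_iff_append.mp ha
      rw [hst] at hnd hch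
      refine ⟨t, hnd.sublist (List.sublist_append_right _ _), hch.right_of_append, ?_⟩
      rw [← hlast]
      simp_rw [hst]
      exact (List.getLast_append_of_ne_nil _ _).symm
    · exact ⟨c :: l, List.nodup_cons.mpr ⟨ha, hnd⟩, hch.cons (by simpa using hac),
        by simpa using hlast⟩

theorem Fin.reflTransGen_of_le {K : ℕ} {t : Fin (K + 1) → α}
    (ht : ∀ k : Fin K, R (t k.castSucc) (t k.succ)) {i j : Fin (K + 1)} (hij : i ≤ j) :
    ReflTransGen R (t i) (t j) := by
  refine ReflTransGen.lift t (fun _ _ h => h) _ _ <|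
    reflTransGen_of_succ_of_le _ (fun k hk => ?_) hij
  obtain ⟨k, rfl⟩ := Fin.eq_castSucc_of_ne_last (hk.2.trans_le (Fin.le_last j)).ne
  simpa using ht k

theorem List.rel_formPerm_apply [DecidableEq α] {a : α} {l : List α} (hnd : (a :: l).Nodup)
    (hch : (a :: l).IsChain R) (hclose : R ((a :: l).getLast (List.cons_ne_nil _ _)) a)
    {y : α} (hy : y ∈ a :: l) : R y ((a :: l).formPerm y) := by
  obtain ⟨i, hi, rfl⟩ := List.getElem_of_mem hy
  rw [List.formPerm_apply_getElem _ hnd]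
  rcases (Nat.succ_le_of_lt hi).lt_or_eq with hlt | heq
  · simp only [Nat.mod_eq_of_lt hlt]
    exact List.isChain_iff_getElem.mp hch i hlt
  · rw [List.getLast_eq_getElem] at hclose
    convert hclose using 2
    · simp only [List.length_cons] at heq ⊢; omega
    · simp [← heq]

theorem Equiv.Perm.SameCycle.reflTransGen [Finite α] {σ : Equiv.Perm α} (hσ : ∀ a, R a (σ a))
    {a b : α} (h : σ.SameCycle a b) : ReflTransGen R a b := by
  obtain ⟨n, rfl⟩ := h.exists_nat_pow_eq
  clear h
  induction n with
  | zero => exact .refl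
  | succ n ih => simpa [pow_succ'] using ih.tail (hσ _)

end Walks

section Pumps

variable {ι : Type*} [Fintype ι] (c : ι → ι → ℝ)

-- With `c s t = p s ⬝ᵥ x s - p s ⬝ᵥ x t`, the supremum of this set is `TMP_c`.
def constrainedPumpValues : Set ℝ :=
  {v | ∃ σ : Equiv.Perm ι, (∀ i, 0 ≤ c i (σ i)) ∧ v = ∑ i, c i (σ i)}

theorem apply_perm_eq_zero_of_forall_not_reflTransGen
    (hc : ∀ a b, 0 < c a b → ¬ReflTransGen (fun i j => 0 ≤ c i j) b a)
    {σ : Equiv.Perm ι} (hσ : ∀ i, 0 ≤ c i (σ i)) (i : ι) : c i (σ i) = 0 :=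
  (hσ i).antisymm' <| not_lt.mp fun hpos =>
    hc _ _ hpos <| (Equiv.Perm.SameCycle.refl σ i).apply_left.reflTransGen hσ

theorem exists_perm_sum_pos_of_reflTransGen [DecidableEq ι] (hc : ∀ i, 0 ≤ c i i) {a b : ι}
    (hab : 0 < c a b) (hba : ReflTransGen (fun i j => 0 ≤ c i j) b a) :
    ∃ σ : Equiv.Perm ι, (∀ i, 0 ≤ c i (σ i)) ∧ 0 < ∑ i, c i (σ i) := by
  obtain ⟨l, hnd, hch, hlast⟩ := hba.exists_nodup_isChain_cons
  have hσ : ∀ i, 0 ≤ c i ((b :: l).formPerm i) := fun i => by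
    by_cases hi : i ∈ b :: l
    · exact List.rel_formPerm_apply hnd hch (hlast ▸ hab.le) hi
    · simpa [List.formPerm_apply_of_notMem hi] using hc i
  have hσa : (b :: l).formPerm a = b := by rw [← hlast, List.formPerm_apply_getLast]
  exact ⟨_, hσ, Finset.sum_pos' (fun i _ => hσ i) ⟨a, Finset.mem_univ _, by rwa [hσa]⟩⟩

theorem sSup_constrainedPumpValues_eq_zero_iff (hc : ∀ i, c i i = 0) :
    sSup (constrainedPumpValues c) = 0 ↔
      ∀ a b, 0 < c a b → ¬ReflTransGen (fun i j => 0 ≤ c i j) b a := by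
  classical
  have hzero : 0 ∈ constrainedPumpValues c :=
    ⟨1, fun i => (hc i).ge, by simp [hc]⟩
  have hbdd : BddAbove (constrainedPumpValues c) := by
    refine (Set.finite_range fun σ : Equiv.Perm ι => ∑ i, c i (σ i)).subset ?_ |>.bddAbove
    rintro _ ⟨σ, -, rfl⟩
    exact ⟨σ, rfl⟩
  constructor
  · intro hsup a b hab hba
    obtain ⟨σ, hσ, hpos⟩ := exists_perm_sum_pos_of_reflTransGen c (fun i => (hc i).ge) hab hba
    exact hpos.not_ge (hsup ▸ le_csSup hbdd ⟨σ, hσ, rfl⟩)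
  · intro hacyc
    refine le_antisymm (csSup_le ⟨0, hzero⟩ ?_) (le_csSup hbdd hzero)
    rintro _ ⟨σ, hσ, rfl⟩
    exact (Finset.sum_eq_zero fun i _ =>
      apply_perm_eq_zero_of_forall_not_reflTransGen c hacyc hσ i).le

end Pumps

theorem garp_iff_forall_not_reflTransGen {L T : ℕ} (p x : Fin T → Fin L → ℝ) :
    GARP p x ↔ ∀ a b, p a ⬝ᵥ x b < p a ⬝ᵥ x a →
      ¬ReflTransGen (fun s t => p s ⬝ᵥ x t ≤ p s ⬝ᵥ x s) b a := by
  constructor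
  · intro hgarp a b hab hba
    obtain ⟨l, hch, hlast⟩ := List.exists_isChain_cons_of_relationReflTransGen hba
    have := hgarp (l.length + 1) (a :: b :: l).get ?_ ?_ 0
    · exact hab.ne (by simpa using this)
    · simp [← hlast, List.getLast_eq_getElem]
    · intro k
      exact List.isChain_iff_getElem.mp (hch.cons (by simpa using hab.le)) k (by simp; omega)
  · intro hacyc K t hcyc hle k
    refine (hle k).eq_of_not_lt fun hlt => hacyc _ _ hlt ?_
    exact (Fin.reflTransGen_of_le hle (Fin.le_last _)).trans
      (hcyc ▸ Fin.reflTransGen_of_le hle (Fin.zero_le _))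

theorem garp_iff_constrained_tmp_zero_general
    {L T : ℕ} (p x : Fin T → Fin L → ℝ) :
    GARP p x ↔
      sSup {v : ℝ | ∃ σ : Equiv.Perm (Fin T),
        (∀ t, p t ⬝ᵥ x (σ t) ≤ p t ⬝ᵥ x t) ∧
        v = ∑ t, (p t ⬝ᵥ x t - p t ⬝ᵥ x (σ t))} = 0 := by
  have hvalues : {v : ℝ | ∃ σ : Equiv.Perm (Fin T),
      (∀ t, p t ⬝ᵥ x (σ t) ≤ p t ⬝ᵥ x t) ∧ v = ∑ t, (p t ⬝ᵥ x t - p t ⬝ᵥ x (σ t))} =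
      constrainedPumpValues fun s t => p s ⬝ᵥ x s - p s ⬝ᵥ x t := by
    simp only [constrainedPumpValues, sub_nonneg]
  rw [hvalues, sSup_constrainedPumpValues_eq_zero_iff _ fun t => sub_self (p t ⬝ᵥ x t),
    garp_iff_forall_not_reflTransGen]
  simp only [sub_pos, sub_nonneg]

/-- GARP holds iff the constrained total money pump `TMP_c` is zero. -/
theorem garp_iff_constrained_tmp_zero
    {L T : ℕ} (p x : Fin T → Fin L → ℝ)
    (hp : ∀ t i, 0 < p t i) (hx : ∀ t i, 0 ≤ x t i) :
    GARP p x ↔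
      sSup {v : ℝ | ∃ σ : Equiv.Perm (Fin T),
        (∀ t, p t ⬝ᵥ x (σ t) ≤ p t ⬝ᵥ x t) ∧
        v = ∑ t, (p t ⬝ᵥ x t - p t ⬝ᵥ x (σ t))} = 0 :=
  garp_iff_constrained_tmp_zero_general p x
end

section
/- If a dataset (p^t,x^t)_{t≤T} is constrained quasilinear rationalized by some utility function U (i.e., U(x^t) - p^t·x^t ≥ U(x) - p^t·x for all x with p^t·x ≤ p^t·x^t), where U is increasing, then the dataset satisfies GARP. -/
open Matrix BigOperators

/-- constrained quasilinear rationalization by an increasing utility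
function implies GARP. -/
theorem constrained_quasilinear_rationalization_implies_garp
    {L T : ℕ} (p x : Fin T → Fin L → ℝ)
    (hp : ∀ t i, 0 < p t i) (hx : ∀ t i, 0 ≤ x t i)
    (U : (Fin L → ℝ) → ℝ)
    (hmono : ∀ a b : Fin L → ℝ, (∀ i, 0 ≤ a i) → (∀ i, 0 ≤ b i) →
      (∀ i, a i ≤ b i) → U a ≤ U b)
    (hstrict : ∀ a b : Fin L → ℝ, (∀ i, 0 ≤ a i) → (∀ i, 0 ≤ b i) →
      (∀ i, a i ≤ b i) → a ≠ b → U a < U b)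
    (hU : ∀ (t : Fin T) (y : Fin L → ℝ), (∀ i, 0 ≤ y i) → p t ⬝ᵥ y ≤ p t ⬝ᵥ x t →
      U y - p t ⬝ᵥ y ≤ U (x t) - p t ⬝ᵥ x t) :
    GARP p x := by
  intro K t hcyc hk
  -- utility along the cycle
  set F : ℕ → ℝ := fun i => U (x (t ⟨min i K, Nat.lt_succ_of_le (min_le_right _ _)⟩)) with hF
  -- the slack terms
  set d : Fin K → ℝ := fun k =>
    p (t k.castSucc) ⬝ᵥ x (t k.castSucc) - p (t k.castSucc) ⬝ᵥ x (t k.succ) with hd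
  have hd_nonneg : ∀ k, 0 ≤ d k := fun k => sub_nonneg.mpr (hk k)
  have hd_le : ∀ k : Fin K, d k ≤ F ↑k - F (↑k + 1) := by
    intro k
    have h := hU (t k.castSucc) (x (t k.succ)) (hx _) (hk k)
    have e1 : (⟨min (k : ℕ) K, Nat.lt_succ_of_le (min_le_right _ _)⟩ : Fin (K + 1))
        = k.castSucc := by
      apply Fin.ext
      simp [Nat.min_eq_left k.isLt.le]
    have e2 : (⟨min ((k : ℕ) + 1) K, Nat.lt_succ_of_le (min_le_right _ _)⟩ : Fin (K + 1))
        = k.succ := by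
      apply Fin.ext
      simp [Nat.min_eq_left (Nat.succ_le_of_lt k.isLt)]
    have h1 : F ↑k = U (x (t k.castSucc)) := by simp only [hF]; rw [e1]
    have h2 : F (↑k + 1) = U (x (t k.succ)) := by simp only [hF]; rw [e2]
    rw [h1, h2, hd]
    dsimp only
    linarith
  have htel : ∑ i ∈ Finset.range K, (F i - F (i + 1)) = F 0 - F K :=
    Finset.sum_range_sub' F K
  have hFK : F 0 - F K = 0 := by
    have : (⟨min 0 K, Nat.lt_succ_of_le (min_le_right _ _)⟩ : Fin (K + 1)) = 0 := by
      exact Fin.ext (by simp)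
    have h2 : (⟨min K K, Nat.lt_succ_of_le (min_le_right _ _)⟩ : Fin (K + 1)) = Fin.last K := by
      exact Fin.ext (by simp)
    simp only [hF, this, h2, hcyc, sub_self]
  have hsum_le : ∑ k : Fin K, d k ≤ 0 := by
    calc ∑ k : Fin K, d k ≤ ∑ k : Fin K, (F ↑k - F (↑k + 1)) :=
          Finset.sum_le_sum fun k _ => hd_le k
      _ = ∑ i ∈ Finset.range K, (F i - F (i + 1)) :=
          (Finset.sum_range fun i => F i - F (i + 1)).symm
      _ = 0 := by rw [htel, hFK]
  have hsum_zero : ∑ k : Fin K, d k = 0 :=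
    le_antisymm hsum_le (Finset.sum_nonneg fun k _ => hd_nonneg k)
  have hzero : ∀ k : Fin K, d k = 0 := by
    intro k
    have := (Finset.sum_eq_zero_iff_of_nonneg (fun i _ => hd_nonneg i)).mp hsum_zero
    exact this k (Finset.mem_univ k)
  intro k
  have := hzero k
  rw [hd] at this
  dsimp only at this
  linarith
end

section
/- Let (p^t,x^t)_{t≤T} be a dataset and m = (m^1,...,m^T) with m^t ≥ p^t·x^t for all t. Suppose that for every permutation σ with m^t ≥ p^t·x^{σ(t)} for all t we have ∑_t p^t·(x^t - x^{σ(t)}) ≤ 0. Then there exists a continuous and increasing utility function U: ℝ_+^L → ℝ such that U(x^t) - p^t·x^t ≥ U(x) - p^t·x for all t and all x ∈ ℝ_+^L with p^t·x ≤ m^t. -/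
/-!
Penalize spending beyond the budget:
`f t y = p t ⬝ᵥ y - p t ⬝ᵥ x t + β * max 0 (p t ⬝ᵥ y - m t)`.
There are finitely many permutations and every infeasible one violates some budget by a
positive amount, so for `β` large enough `∑ t, f t (x (σ t)) ≥ 0` for every permutation `σ`
(for feasible ones this is the no-pumping hypothesis). Such cyclic monotonicity of the weights
`f s (x t)` gives, through shortest duplicate-free walks, potentials with
`c t ≤ f s (x t) + c s`. Then `U = min_t (f t + c t)` is continuous and strictly increasing,
`U ≤ f t + c t` and `c t ≤ U (x t)`, which is the rationalization inequality on the budget set.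
-/

open Matrix Finset Filter Equiv

section Walks

variable {ι : Type*} (w : ι → ι → ℝ)

def walkCost : List ι → ℝ
  | a :: b :: l => w a b + walkCost (b :: l)
  | _ => 0

@[simp] lemma walkCost_singleton (a : ι) : walkCost w [a] = 0 := rfl

@[simp] lemma walkCost_cons_cons (a b : ι) (l : List ι) :
    walkCost w (a :: b :: l) = w a b + walkCost w (b :: l) := rfl

lemma walkCost_append_cons (a : ι) (l₂ : List ι) : ∀ l₁ : List ι,
    walkCost w (l₁ ++ a :: l₂) = walkCost w (l₁ ++ [a]) + walkCost w (a :: l₂)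
  | [] => by simp
  | [b] => by simp
  | b :: c :: l₁ => by
    have ih := walkCost_append_cons a l₂ (c :: l₁)
    simp only [List.cons_append, walkCost_cons_cons] at ih ⊢
    rw [ih, add_assoc]

lemma walkCost_concat {l : List ι} (hl : l ≠ []) (a : ι) :
    walkCost w (l ++ [a]) = walkCost w l + w (l.getLast hl) a := by
  conv_lhs => rw [← List.dropLast_append_getLast hl, List.append_assoc, List.singleton_append,
    walkCost_append_cons, List.dropLast_append_getLast hl]
  simp

end Walks

section Cycles

variable {ι : Type*} [Fintype ι] [DecidableEq ι]

lemma sum_apply_swap_mul (f : ι → ι → ℝ) (τ : Perm ι) {a b z : ι} (hab : a ≠ b)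
    (ha : τ a = a) (hz : τ z = b) :
    ∑ t, f t ((swap a b * τ) t) + f a a + f z b = ∑ t, f t (τ t) + f a b + f z a := by
  have haz : a ≠ z := by rintro rfl; exact hab (ha.symm.trans hz)
  have hoff : ∀ t ∈ (univ : Finset ι), t ∉ ({a, z} : Finset ι) →
      f t ((swap a b * τ) t) - f t (τ t) = 0 := by
    intro t _ ht
    simp only [mem_insert, mem_singleton, not_or] at ht
    rw [Perm.mul_apply, swap_apply_of_ne_of_ne, sub_self]
    · exact fun h => ht.1 (τ.injective (h.trans ha.symm))
    · exact fun h => ht.2 (τ.injective (h.trans hz.symm))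
  have := sum_subset (subset_univ _) hoff
  rw [sum_pair haz, sum_sub_distrib] at this
  simp only [Perm.mul_apply, ha, hz, swap_apply_left, swap_apply_right] at this ⊢
  linarith

lemma sum_apply_formPerm (w : ι → ι → ℝ) (hw : ∀ t, w t t = 0) :
    ∀ (a : ι) (l : List ι), (a :: l).Nodup →
      ∑ t, w t ((a :: l).formPerm t) = walkCost w (a :: l ++ [a])
  | a, [], _ => by simp [hw]
  | a, b :: l, hnd => by
    have ha : a ∉ b :: l := (List.nodup_cons.mp hnd).1
    have hbl : b :: l ≠ [] := List.cons_ne_nil _ _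
    have key := sum_apply_swap_mul w (b :: l).formPerm (a := a) (b := b)
      (z := (b :: l).getLast hbl) (fun h => ha (h ▸ List.mem_cons_self))
      (List.formPerm_apply_of_notMem ha) (List.formPerm_apply_getLast b l)
    rw [← List.formPerm_cons_cons, sum_apply_formPerm w hw b l hnd.of_cons, hw,
      walkCost_concat w hbl] at key
    rw [show walkCost w (a :: b :: l ++ [a]) = w a b + walkCost w (b :: l ++ [a]) from rfl,
      walkCost_concat w hbl]
    linarith

end Cycles

section Potential

variable {ι : Type*} [Fintype ι] (w : ι → ι → ℝ)

noncomputable def minWalkCost (t : ι) : ℝ :=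
  sInf ((fun l => walkCost w (t :: l)) '' {l | (t :: l).Nodup})

lemma finite_walkCosts (t : ι) :
    ((fun l => walkCost w (t :: l)) '' {l | (t :: l).Nodup}).Finite := by
  refine Set.Finite.image _ ((List.finite_length_le ι (Fintype.card ι)).subset fun l hl => ?_)
  exact hl.of_cons.length_le_card

lemma minWalkCost_le {t : ι} {l : List ι} (hl : (t :: l).Nodup) :
    minWalkCost w t ≤ walkCost w (t :: l) :=
  csInf_le (finite_walkCosts w t).bddBelow ⟨l, hl, rfl⟩

lemma exists_walkCost_eq_minWalkCost (t : ι) :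
    ∃ l, (t :: l).Nodup ∧ walkCost w (t :: l) = minWalkCost w t := by
  have hne : ((fun l => walkCost w (t :: l)) '' {l | (t :: l).Nodup}).Nonempty :=
    ⟨_, [], List.nodup_singleton t, rfl⟩
  exact hne.csInf_mem (finite_walkCosts w t)

variable [DecidableEq ι]

lemma minWalkCost_le_add (hw : ∀ t, w t t = 0) (hσ : ∀ σ : Perm ι, 0 ≤ ∑ t, w t (σ t))
    (s t : ι) : minWalkCost w s ≤ w s t + minWalkCost w t := by
  obtain ⟨l, hl, hlt⟩ := exists_walkCost_eq_minWalkCost w t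
  by_cases hst : s = t
  · simp [hst, hw]
  by_cases hs : s ∉ l
  · calc minWalkCost w s ≤ walkCost w (s :: t :: l) :=
          minWalkCost_le w (List.nodup_cons.mpr ⟨by simp [hst, hs], hl⟩)
      _ = w s t + minWalkCost w t := by rw [walkCost_cons_cons, hlt]
  -- The optimal walk from `t` passes through `s`: its part up to `s`, closed by the edge
  -- `s → t`, is a cycle of nonnegative cost, and dropping it leaves a walk from `s`.
  obtain ⟨l₁, l₂, rfl⟩ := List.append_of_mem (not_not.mp hs)
  have hsplit : walkCost w (t :: (l₁ ++ s :: l₂)) =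
      walkCost w (t :: l₁ ++ [s]) + walkCost w (s :: l₂) :=
    walkCost_append_cons w s l₂ (t :: l₁)
  have hcycle : 0 ≤ walkCost w (t :: l₁ ++ [s]) + w s t := by
    have h := hσ (t :: (l₁ ++ [s])).formPerm
    rwa [sum_apply_formPerm w hw t _ (hl.sublist (by simp)),
      show t :: (l₁ ++ [s]) ++ [t] = t :: l₁ ++ [s, t] by simp, walkCost_append_cons,
      walkCost_cons_cons, walkCost_singleton, add_zero] at h
  have := minWalkCost_le w (hl.sublist (by simp) : (s :: l₂).Nodup)
  rw [← hlt]
  linarith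

theorem exists_potential (hw : ∀ t, w t t = 0) (hσ : ∀ σ : Perm ι, 0 ≤ ∑ t, w t (σ t)) :
    ∃ c : ι → ℝ, ∀ s t, c t ≤ w s t + c s :=
  ⟨fun t => -minWalkCost w t, fun s t => by linarith [minWalkCost_le_add w hw hσ s t]⟩

end Potential

lemma eventually_forall_nonneg_add_mul {α : Type*} [Finite α] {a b : α → ℝ}
    (hb : ∀ i, 0 ≤ b i) (hab : ∀ i, b i = 0 → 0 ≤ a i) :
    ∀ᶠ β in atTop, ∀ i, 0 ≤ a i + β * b i := by
  refine eventually_all.2 fun i => ?_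
  rcases (hb i).eq_or_lt with h | h
  · exact Eventually.of_forall fun β => by simpa [← h] using hab i h.symm
  · filter_upwards [eventually_ge_atTop (-a i / b i)] with β hβ
    linarith [(div_le_iff₀ h).1 hβ]

lemma strictMono_dotProduct {n : Type*} [Fintype n] {p : n → ℝ} (hp : ∀ i, 0 < p i) :
    StrictMono (p ⬝ᵥ ·) := by
  intro a b hab
  obtain ⟨hle, i, hi⟩ := Pi.lt_def.mp hab
  exact sum_lt_sum (fun j _ => mul_le_mul_of_nonneg_left (hle j) (hp j).le)
    ⟨i, mem_univ i, mul_lt_mul_of_pos_left hi (hp i)⟩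

section PenalizedSupport

variable {n : Type*} [Fintype n]

def penalizedSupport (p x : n → ℝ) (m β : ℝ) (y : n → ℝ) : ℝ :=
  p ⬝ᵥ y - p ⬝ᵥ x + β * max 0 (p ⬝ᵥ y - m)

variable {p x y : n → ℝ} {m β : ℝ}

lemma penalizedSupport_of_le (hy : p ⬝ᵥ y ≤ m) :
    penalizedSupport p x m β y = p ⬝ᵥ y - p ⬝ᵥ x := by
  simp [penalizedSupport, max_eq_left (sub_nonpos.mpr hy)]

lemma continuous_penalizedSupport : Continuous (penalizedSupport p x m β) := by
  unfold penalizedSupport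
  have := continuous_const.dotProduct continuous_id (A := fun _ : n → ℝ => p)
  fun_prop

lemma strictMono_penalizedSupport (hp : ∀ i, 0 < p i) (hβ : 0 ≤ β) :
    StrictMono (penalizedSupport p x m β) :=
  ((strictMono_dotProduct hp).add_const _).add_monotone fun _ _ h =>
    mul_le_mul_of_nonneg_left
      (max_le_max le_rfl (by linarith [(strictMono_dotProduct hp).monotone h])) hβ

end PenalizedSupport

lemma exists_penalty_sum_perm_nonneg {ι n : Type*} [Fintype ι] [DecidableEq ι] [Fintype n]
    (p x : ι → n → ℝ) (m : ι → ℝ)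
    (hnopump : ∀ σ : Perm ι, (∀ t, p t ⬝ᵥ x (σ t) ≤ m t) →
      ∑ t, (p t ⬝ᵥ x t - p t ⬝ᵥ x (σ t)) ≤ 0) :
    ∃ β, 0 ≤ β ∧ ∀ σ : Perm ι,
      0 ≤ ∑ t, penalizedSupport (p t) (x t) (m t) β (x (σ t)) := by
  have hfeasible : ∀ σ : Perm ι, ∑ t, max 0 (p t ⬝ᵥ x (σ t) - m t) = 0 →
      0 ≤ ∑ t, (p t ⬝ᵥ x (σ t) - p t ⬝ᵥ x t) := by
    intro σ hσ
    have hle : ∀ t, p t ⬝ᵥ x (σ t) ≤ m t := fun t => by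
      have := (sum_eq_zero_iff_of_nonneg fun t _ => le_max_left _ _).1 hσ t (mem_univ t)
      linarith [le_max_right 0 (p t ⬝ᵥ x (σ t) - m t)]
    have := hnopump σ hle
    rw [sum_sub_distrib] at this ⊢
    linarith
  obtain ⟨β, hβ, hβ0⟩ := ((eventually_forall_nonneg_add_mul
    (fun σ => sum_nonneg fun t _ => le_max_left _ _) hfeasible).and
    (eventually_ge_atTop 0)).exists
  refine ⟨β, hβ0, fun σ => ?_⟩
  simpa [penalizedSupport, sum_add_distrib, mul_sum] using hβ σ

lemma strictMono_finset_inf' {ι α β : Type*} [Preorder α] [LinearOrder β] {s : Finset ι}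
    (hs : s.Nonempty) {f : ι → α → β} (hf : ∀ i ∈ s, StrictMono (f i)) :
    StrictMono fun y => s.inf' hs (f · y) := by
  intro a b hab
  obtain ⟨i, hi, hb⟩ := exists_mem_eq_inf' hs (f · b)
  exact ((inf'_le _ hi).trans_lt (hf i hi hab)).trans_eq hb.symm

theorem exists_constrained_quasilinear_rationalization_general
    {L T : ℕ} (p x : Fin T → Fin L → ℝ)
    (hp : ∀ t i, 0 < p t i)
    (m : Fin T → ℝ) (hm : ∀ t, p t ⬝ᵥ x t ≤ m t)
    (hnopump : ∀ σ : Equiv.Perm (Fin T), (∀ t, p t ⬝ᵥ x (σ t) ≤ m t) →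
      ∑ t, (p t ⬝ᵥ x t - p t ⬝ᵥ x (σ t)) ≤ 0) :
    ∃ U : (Fin L → ℝ) → ℝ,
      ContinuousOn U {y : Fin L → ℝ | ∀ i, 0 ≤ y i} ∧
      (∀ a b : Fin L → ℝ, (∀ i, 0 ≤ a i) → (∀ i, 0 ≤ b i) →
        (∀ i, a i ≤ b i) → U a ≤ U b) ∧
      (∀ a b : Fin L → ℝ, (∀ i, 0 ≤ a i) → (∀ i, 0 ≤ b i) →
        (∀ i, a i ≤ b i) → a ≠ b → U a < U b) ∧
      (∀ (t : Fin T) (y : Fin L → ℝ), (∀ i, 0 ≤ y i) → p t ⬝ᵥ y ≤ m t →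
        U y - p t ⬝ᵥ y ≤ U (x t) - p t ⬝ᵥ x t) := by
  suffices ∃ U, Continuous U ∧ StrictMono U ∧
      ∀ t y, p t ⬝ᵥ y ≤ m t → U y - p t ⬝ᵥ y ≤ U (x t) - p t ⬝ᵥ x t by
    obtain ⟨U, hcont, hmono, hrat⟩ := this
    exact ⟨U, hcont.continuousOn, fun a b _ _ hab => hmono.monotone hab,
      fun a b _ _ hab hne => hmono (lt_of_le_of_ne hab hne), fun t y _ => hrat t y⟩
  rcases isEmpty_or_nonempty (Fin T) with hT | hT
  · exact ⟨((fun _ => 1) ⬝ᵥ ·), continuous_const.dotProduct continuous_id,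
      strictMono_dotProduct fun _ => one_pos, fun t => isEmptyElim t⟩
  obtain ⟨β, hβ, hσ⟩ := exists_penalty_sum_perm_nonneg p x m hnopump
  set f : Fin T → (Fin L → ℝ) → ℝ := fun t => penalizedSupport (p t) (x t) (m t) β
  obtain ⟨c, hc⟩ := exists_potential (fun s t => f s (x t))
    (fun t => by simp [f, penalizedSupport_of_le (hm t)]) hσ
  refine ⟨fun y => univ.inf' univ_nonempty fun t => f t y + c t,
    Continuous.finset_inf'_apply _ fun t _ => continuous_penalizedSupport.add continuous_const,
    strictMono_finset_inf' _ fun t _ => (strictMono_penalizedSupport (hp t) hβ).add_const _,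
    fun t y hy => ?_⟩
  have hU_le : (univ.inf' univ_nonempty fun t => f t y + c t) ≤ f t y + c t :=
    inf'_le _ (mem_univ t)
  have hc_le : c t ≤ univ.inf' univ_nonempty fun s => f s (x t) + c s :=
    le_inf' _ _ fun s _ => hc s t
  have hf : f t y = p t ⬝ᵥ y - p t ⬝ᵥ x t := penalizedSupport_of_le hy
  linarith

/-- Lemma on constrained quasilinear rationalization over budgets `m`:
if no permutation that stays within the budgets `m` pumps money, then there is a
continuous and increasing utility function which constrained quasilinear rationalizes
the data with respect to the budgets `m`. -/
theorem exists_constrained_quasilinear_rationalization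
    {L T : ℕ} (p x : Fin T → Fin L → ℝ)
    (hp : ∀ t i, 0 < p t i) (hx : ∀ t i, 0 ≤ x t i)
    (m : Fin T → ℝ) (hm : ∀ t, p t ⬝ᵥ x t ≤ m t)
    (hnopump : ∀ σ : Equiv.Perm (Fin T), (∀ t, p t ⬝ᵥ x (σ t) ≤ m t) →
      ∑ t, (p t ⬝ᵥ x t - p t ⬝ᵥ x (σ t)) ≤ 0) :
    ∃ U : (Fin L → ℝ) → ℝ,
      ContinuousOn U {y : Fin L → ℝ | ∀ i, 0 ≤ y i} ∧
      (∀ a b : Fin L → ℝ, (∀ i, 0 ≤ a i) → (∀ i, 0 ≤ b i) →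
        (∀ i, a i ≤ b i) → U a ≤ U b) ∧
      (∀ a b : Fin L → ℝ, (∀ i, 0 ≤ a i) → (∀ i, 0 ≤ b i) →
        (∀ i, a i ≤ b i) → a ≠ b → U a < U b) ∧
      (∀ (t : Fin T) (y : Fin L → ℝ), (∀ i, 0 ≤ y i) → p t ⬝ᵥ y ≤ m t →
        U y - p t ⬝ᵥ y ≤ U (x t) - p t ⬝ᵥ x t) :=
  exists_constrained_quasilinear_rationalization_general p x hp m hm hnopump
end

section
/- For any dataset, TMP_c ≤ TMP, and if the dataset satisfies GARP then TMP_c = 0 while TMP may be strictly positive; in particular, for the two-observation dataset with L = 2, x^1 = (1,1), p^1 = (1,1), x^2 = (2,2), p^2 = (2,2), GARP holds and TMP_c = 0, yet TMP = 2 > 0. -/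
open Matrix BigOperators

/-- Total money pump: best money pump over all permutations. -/
noncomputable def TMP {L T : ℕ} (p x : Fin T → Fin L → ℝ) : ℝ :=
  sSup {v : ℝ | ∃ σ : Equiv.Perm (Fin T), v = ∑ t, (p t ⬝ᵥ x t - p t ⬝ᵥ x (σ t))}

/-- Constrained total money pump: best money pump over constrained permutations. -/
noncomputable def TMPc {L T : ℕ} (p x : Fin T → Fin L → ℝ) : ℝ :=
  sSup {v : ℝ | ∃ σ : Equiv.Perm (Fin T), (∀ t, p t ⬝ᵥ x (σ t) ≤ p t ⬝ᵥ x t) ∧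
    v = ∑ t, (p t ⬝ᵥ x t - p t ⬝ᵥ x (σ t))}

/-- Under GARP, every constrained permutation yields equality at each observation. -/
lemma garp_perm_eq {L T : ℕ} (p x : Fin T → Fin L → ℝ) (h : GARP p x)
    (σ : Equiv.Perm (Fin T)) (hσ : ∀ t, p t ⬝ᵥ x (σ t) ≤ p t ⬝ᵥ x t) (t : Fin T) :
    p t ⬝ᵥ x (σ t) = p t ⬝ᵥ x t := by
  have hKpos : 0 < orderOf σ := orderOf_pos σ
  set s : Fin (orderOf σ + 1) → Fin T := fun k => (σ ^ (k : ℕ)) t with hs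
  have hcyc : s 0 = s (Fin.last (orderOf σ)) := by
    simp [hs, Fin.val_last, pow_orderOf_eq_one]
  have hstep : ∀ k : Fin (orderOf σ),
      p (s k.castSucc) ⬝ᵥ x (s k.succ) ≤ p (s k.castSucc) ⬝ᵥ x (s k.castSucc) := by
    intro k
    have : s k.succ = σ (s k.castSucc) := by
      simp [hs, Fin.val_succ, Fin.coe_castSucc, pow_succ', Equiv.Perm.mul_apply]
    rw [this]
    exact hσ _
  have := h (orderOf σ) s hcyc hstep ⟨0, hKpos⟩
  have h0 : s (Fin.castSucc ⟨0, hKpos⟩) = t := by simp [hs]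
  have h1 : s (Fin.succ ⟨0, hKpos⟩) = σ t := by simp [hs]
  rw [h0, h1] at this
  exact this

lemma tmpc_set_eq_singleton {L T : ℕ} (p x : Fin T → Fin L → ℝ) (h : GARP p x) :
    {v : ℝ | ∃ σ : Equiv.Perm (Fin T), (∀ t, p t ⬝ᵥ x (σ t) ≤ p t ⬝ᵥ x t) ∧
      v = ∑ t, (p t ⬝ᵥ x t - p t ⬝ᵥ x (σ t))} = {0} := by
  apply Set.eq_singleton_iff_unique_mem.mpr
  constructor
  · exact ⟨1, fun t => le_refl _, by simp⟩
  · rintro v ⟨σ, hσ, rfl⟩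
    have key := garp_perm_eq p x h σ hσ
    simp [key]

lemma tmp_bddAbove {L T : ℕ} (p x : Fin T → Fin L → ℝ) :
    BddAbove {v : ℝ | ∃ σ : Equiv.Perm (Fin T), v = ∑ t, (p t ⬝ᵥ x t - p t ⬝ᵥ x (σ t))} := by
  apply Set.Finite.bddAbove
  apply Set.Finite.subset
    (Set.finite_range (fun σ : Equiv.Perm (Fin T) => ∑ t, (p t ⬝ᵥ x t - p t ⬝ᵥ x (σ t))))
  rintro v ⟨σ, rfl⟩
  exact ⟨σ, rfl⟩

lemma tmpc_le_tmp_gen {L T : ℕ} (p x : Fin T → Fin L → ℝ) : TMPc p x ≤ TMP p x := by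
  apply csSup_le_csSup (tmp_bddAbove p x)
  · exact ⟨0, 1, fun t => le_refl _, by simp⟩
  · rintro v ⟨σ, _, rfl⟩
    exact ⟨σ, rfl⟩

/-- The example data. -/
noncomputable def M : Fin 2 → Fin 2 → ℝ := ![![(1:ℝ),1],![2,2]]

lemma dot00 : M 0 ⬝ᵥ M 0 = 2 := by simp [M, dotProduct, Fin.sum_univ_two]; norm_num
lemma dot01 : M 0 ⬝ᵥ M 1 = 4 := by simp [M, dotProduct, Fin.sum_univ_two]; norm_num
lemma dot10 : M 1 ⬝ᵥ M 0 = 4 := by simp [M, dotProduct, Fin.sum_univ_two]; norm_num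
lemma dot11 : M 1 ⬝ᵥ M 1 = 8 := by simp [M, dotProduct, Fin.sum_univ_two]; norm_num

lemma garp_example : GARP M M := by
  intro K t hcyc hle k
  -- key step facts
  have fwd : ∀ j : Fin K, t j.castSucc = 0 → t j.succ = 0 := by
    intro j hj
    have := hle j
    rw [hj] at this
    by_contra hne
    have h1 : t j.succ = 1 := by omega
    rw [h1, dot01, dot00] at this
    linarith
  have bwd : ∀ j : Fin K, t j.succ = 1 → t j.castSucc = 1 := by
    intro j hj
    have := hle j
    by_contra hne
    have h0 : t j.castSucc = 0 := by omega
    rw [h0, hj, dot01, dot00] at this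
    linarith
  -- all entries are equal to t 0
  have hall : ∀ j : Fin (K + 1), t j = t 0 := by
    rcases Fin.exists_fin_two.mp ⟨t 0, rfl⟩ with h0 | h0
    · intro j
      rw [h0]
      induction j using Fin.induction with
      | zero => exact h0
      | succ i ih => exact fwd i ih
    · intro j
      rw [h0]
      have hlast : t (Fin.last K) = 1 := hcyc ▸ h0
      induction j using Fin.reverseInduction with
      | last => exact hlast
      | cast i ih => exact bwd i ih
  rw [hall k.castSucc, hall k.succ]

/-- always `TMP_c ≤ TMP`; GARP implies `TMP_c = 0`; and in the example with
`x^1 = p^1 = (1,1)`, `x^2 = p^2 = (2,2)`, GARP holds, `TMP_c = 0`, yet `TMP = 2 > 0`. -/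
theorem tmpc_le_tmp_and_example :
    (∀ (L T : ℕ) (p x : Fin T → Fin L → ℝ),
      (∀ t i, 0 < p t i) → (∀ t i, 0 ≤ x t i) → TMPc p x ≤ TMP p x) ∧
    (∀ (L T : ℕ) (p x : Fin T → Fin L → ℝ),
      (∀ t i, 0 < p t i) → (∀ t i, 0 ≤ x t i) → GARP p x → TMPc p x = 0) ∧
    (GARP (![![(1:ℝ),1],![2,2]]) (![![(1:ℝ),1],![2,2]]) ∧
      TMPc (![![(1:ℝ),1],![2,2]]) (![![(1:ℝ),1],![2,2]]) = 0 ∧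
      TMP (![![(1:ℝ),1],![2,2]]) (![![(1:ℝ),1],![2,2]]) = 2) := by
  have hM : (![![(1:ℝ),1],![2,2]]) = M := rfl
  refine ⟨fun L T p x _ _ => tmpc_le_tmp_gen p x, fun L T p x _ _ h => ?_, ?_, ?_, ?_⟩
  · rw [TMPc, tmpc_set_eq_singleton p x h, csSup_singleton]
  · rw [hM]; exact garp_example
  · rw [hM, TMPc, tmpc_set_eq_singleton M M garp_example, csSup_singleton]
  · rw [hM, TMP]
    apply le_antisymm
    · apply csSup_le
      · exact ⟨0, 1, by simp⟩
      · rintro v ⟨σ, rfl⟩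
        rw [Fin.sum_univ_two]
        rcases Fin.exists_fin_two.mp ⟨σ 0, rfl⟩ with h0 | h0
        · have h1 : σ 1 = 1 := by
            rcases Fin.exists_fin_two.mp ⟨σ 1, rfl⟩ with h1 | h1
            · exact absurd (σ.injective (h0.trans h1.symm)) (by decide)
            · exact h1
          rw [h0, h1, dot00, dot11]; norm_num
        · have h1 : σ 1 = 0 := by
            rcases Fin.exists_fin_two.mp ⟨σ 1, rfl⟩ with h1 | h1
            · exact h1
            · exact absurd (σ.injective (h0.trans h1.symm)) (by decide)
          rw [h0, h1, dot01, dot10, dot00, dot11]; norm_num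
    · apply le_csSup (tmp_bddAbove M M)
      refine ⟨Equiv.swap 0 1, ?_⟩
      rw [Fin.sum_univ_two]
      simp only [Equiv.swap_apply_left, Equiv.swap_apply_right]
      rw [dot00, dot01, dot10, dot11]; norm_num
end
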